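/- Assume the setting. Let U ⊆ M and let A₀,…,A_{l−1} be open subsets of M with pairwise disjoint closures such that f^k(U,Δ) ⊆ A_{k mod l} for every k ≥ 1. Then ω(U,Δ) is c-invariant, i.e. f^k(z,ψ) ∈ ω(U,Δ) for every z ∈ ω(U,Δ), every ψ ∈ Δ and every k ≥ 1; moreover whenever z ∈ ω(U,Δ) ∩ closure(A_i) for some 0 ≤ i ≤ l−1, one has f^k(z,ψ) ∈ closure(A_{(i+k) mod l}) for every k ≥ 1 and every ψ ∈ Δ. -/

import Mathlib

open MeasureTheory Metric Set Filter Topology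

noncomputable section

/-- The parameter space `T`: the closed `ε`-ball around `a` in `ℝⁿ`. -/
abbrev PSpace (n : ℕ) (a : EuclideanSpace ℝ (Fin n)) (ε : ℝ) : Type _ :=
  ↥(Metric.closedBall a ε)

/-- Perturbed iterates: `pIter f k z t = f_{t_k} ∘ ⋯ ∘ f_{t_1} (z)`
(the sequence `t` is indexed from `0` here). -/
def pIter {M T : Type*} (f : M → T → M) : ℕ → M → (ℕ → T) → M
  | 0, z, _ => z
  | k + 1, z, t => f (pIter f k z t) (t k)

/-- An s-invariant domain for the randomly perturbed system: a finite tuple of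
nonempty open sets with pairwise disjoint closures, permuted cyclically by all
perturbed iterates. -/
structure SInvDomain {M T : Type*} [TopologicalSpace M] (f : M → T → M) where
  r : ℕ
  r_pos : 0 < r
  U : Fin r → Set M
  isOpen : ∀ i, IsOpen (U i)
  nonempty : ∀ i, (U i).Nonempty
  separated : ∀ i j : Fin r, i ≠ j → closure (U i) ∩ closure (U j) = ∅
  invariant : ∀ k : ℕ, 1 ≤ k → ∀ i : Fin r, ∀ z ∈ U i, ∀ t : ℕ → T,
    pIter f k z t ∈ U ⟨((i : ℕ) + k) % r, Nat.mod_lt _ r_pos⟩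

/-- The union `⋃D` of the open sets forming an s-invariant domain. -/
def SInvDomain.carrier {M T : Type*} [TopologicalSpace M] {f : M → T → M}
    (D : SInvDomain f) : Set M := ⋃ i, D.U i

/-- The partial order `D ⪯ D'` on s-invariant domains. -/
def DomLE {M T : Type*} [TopologicalSpace M] {f : M → T → M}
    (D D' : SInvDomain f) : Prop :=
  ∃ i i' : ℕ, ∀ k : ℕ, 1 ≤ k →
    D.U ⟨(i + k) % D.r, Nat.mod_lt _ D.r_pos⟩ ⊆ D'.U ⟨(i' + k) % D'.r, Nat.mod_lt _ D'.r_pos⟩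

/-- Two s-invariant domains coincide up to cyclic shift. -/
def CyclicEq {M T : Type*} [TopologicalSpace M] {f : M → T → M}
    (D D' : SInvDomain f) : Prop :=
  ∃ i i' : ℕ, ∀ k : ℕ, 1 ≤ k →
    D.U ⟨(i + k) % D.r, Nat.mod_lt _ D.r_pos⟩ = D'.U ⟨(i' + k) % D'.r, Nat.mod_lt _ D'.r_pos⟩

/-- A minimal invariant domain. -/
def MinimalDom {M T : Type*} [TopologicalSpace M] {f : M → T → M}
    (D : SInvDomain f) : Prop :=
  ∀ D' : SInvDomain f, DomLE D' D → CyclicEq D' D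

/-- A c-invariant (completely invariant) set. -/
def CInvariant {M T : Type*} (f : M → T → M) (C : Set M) : Prop :=
  ∀ x ∈ C, ∀ t : ℕ → T, ∀ k : ℕ, 1 ≤ k → pIter f k x t ∈ C

/-- The ω-limit of a point under a fixed perturbation vector. -/
def omegaPt {M T : Type*} [TopologicalSpace M] (f : M → T → M) (z : M) (t : ℕ → T) : Set M :=
  {w | ∃ nseq : ℕ → ℕ, StrictMono nseq ∧
    Tendsto (fun j => pIter f (nseq j) z t) atTop (𝓝 w)}

/-- The ω-limit of a set under a fixed perturbation vector. -/
def omegaSet {M T : Type*} [TopologicalSpace M] (f : M → T → M) (U : Set M) (t : ℕ → T) :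
    Set M :=
  {w | ∃ (u : ℕ → M) (nseq : ℕ → ℕ), (∀ j, u j ∈ U) ∧ StrictMono nseq ∧
    Tendsto (fun j => pIter f (nseq j) (u j) t) atTop (𝓝 w)}

/-- The ω-limit of a set under all perturbation vectors. -/
def omegaSetAll {M T : Type*} [TopologicalSpace M] (f : M → T → M) (U : Set M) : Set M :=
  {w | ∃ (u : ℕ → M) (ts : ℕ → ℕ → T) (nseq : ℕ → ℕ), (∀ j, u j ∈ U) ∧ StrictMono nseq ∧
    Tendsto (fun j => pIter f (nseq j) (u j) (ts j)) atTop (𝓝 w)}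

/-- A stationary probability measure for the perturbed system. -/
def Stationary {M T : Type*} [TopologicalSpace M] [MeasurableSpace M] [MeasurableSpace T]
    (f : M → T → M) (ν : Measure T) (μ : Measure M) : Prop :=
  ∀ φ : C(M, ℝ), ∫ z, (∫ t, φ (f z t) ∂ν) ∂μ = ∫ z, φ z ∂μ

/-- The skew product map `S(z,t) = (f_{t₁}(z), σ t)`. -/
def skewProd {M T : Type*} (f : M → T → M) : M × (ℕ → T) → M × (ℕ → T) :=
  fun p => (f p.1 (p.2 0), fun i => p.2 (i + 1))

/-- The support of a measure: points all of whose open neighbourhoods have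
positive measure. -/
def msupport {M : Type*} [TopologicalSpace M] [MeasurableSpace M] (μ : Measure M) : Set M :=
  {x | ∀ O : Set M, IsOpen O → x ∈ O → 0 < μ O}

/-- The ergodic basin `E(μ)` of a stationary measure: points whose time averages along
`ν^∞`-a.e. perturbed orbit converge to the space average of every continuous function. -/
def basin {M T : Type*} [TopologicalSpace M] [MeasurableSpace M] [MeasurableSpace T]
    (f : M → T → M) (νinf : Measure (ℕ → T)) (μ : Measure M) : Set M :=
  {x | ∀ᵐ t ∂νinf, ∀ φ : C(M, ℝ),
    Tendsto (fun nn : ℕ => (nn : ℝ)⁻¹ * ∑ j ∈ Finset.range nn, φ (pIter f j x t))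
      atTop (𝓝 (∫ z, φ z ∂μ))}

lemma pIter_congr {M T : Type*} (f : M → T → M) (k : ℕ) (z : M) {t t' : ℕ → T}
    (h : ∀ i < k, t i = t' i) : pIter f k z t = pIter f k z t' := by
  induction k with
  | zero => rfl
  | succ k ih =>
    show f (pIter f k z t) (t k) = f (pIter f k z t') (t' k)
    rw [ih fun i hi => h i (hi.trans (Nat.lt_succ_self k)), h k (Nat.lt_succ_self k)]

lemma pIter_add {M T : Type*} (f : M → T → M) (n k : ℕ) (z : M) (t : ℕ → T) :
    pIter f (n + k) z t = pIter f k (pIter f n z t) (fun i => t (n + i)) := by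
  induction k with
  | zero => rfl
  | succ k ih =>
    show f (pIter f (n + k) z t) (t (n + k)) = _
    rw [ih]; rfl

lemma continuous_pIter {M T : Type*} [TopologicalSpace M] [TopologicalSpace T]
    {f : M → T → M} (hfc : Continuous fun p : M × T => f p.1 p.2) (k : ℕ) (t : ℕ → T) :
    Continuous fun z => pIter f k z t := by
  induction k with
  | zero => exact continuous_id
  | succ k ih =>
    show Continuous fun z => f (pIter f k z t) (t k)
    exact hfc.comp (ih.prodMk continuous_const)

lemma pIter_key {M T : Type*} [TopologicalSpace M] [TopologicalSpace T]
    {f : M → T → M} (hfc : Continuous fun p : M × T => f p.1 p.2)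
    {z : M} {u : ℕ → M} {ts : ℕ → ℕ → T} {nseq : ℕ → ℕ}
    (htend : Tendsto (fun j => pIter f (nseq j) (u j) (ts j)) atTop (𝓝 z))
    (ψ : ℕ → T) (k : ℕ) :
    ∃ ts' : ℕ → ℕ → T,
      (∀ j, pIter f (nseq j + k) (u j) (ts' j)
        = pIter f k (pIter f (nseq j) (u j) (ts j)) ψ) ∧
      Tendsto (fun j => pIter f (nseq j + k) (u j) (ts' j)) atTop (𝓝 (pIter f k z ψ)) := by
  set ts' : ℕ → ℕ → T := fun j i => if i < nseq j then ts j i else ψ (i - nseq j) with hts'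
  have hkey : ∀ j, pIter f (nseq j + k) (u j) (ts' j)
      = pIter f k (pIter f (nseq j) (u j) (ts j)) ψ := by
    intro j
    rw [pIter_add]
    congr 1
    · exact pIter_congr f _ _ fun i hi => if_pos hi
    · funext i
      simp only [hts', Nat.add_sub_cancel_left, if_neg (by omega : ¬ nseq j + i < nseq j)]
  refine ⟨ts', hkey, ?_⟩
  exact (((continuous_pIter hfc k ψ).tendsto z).comp htend).congr fun j => (hkey j).symm

/-- If the perturbed orbits of `U` under all perturbations pass
cyclically through the pairwise separated open sets `A₀,…,A_{l−1}`, then `ω(U,Δ)` is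
c-invariant and its points are carried cyclically through the closures by every
perturbation. -/
theorem statement4
    (n : ℕ) (hn : 1 ≤ n) (a : EuclideanSpace ℝ (Fin n)) (ε : ℝ) (hε : 0 < ε)
    (a₀ : PSpace n a ε) (ha₀ : (a₀ : EuclideanSpace ℝ (Fin n)) = a)
    (ν : Measure (PSpace n a ε))
    (hν : ν = (volume (Metric.closedBall a ε))⁻¹ •
      ((volume : Measure (EuclideanSpace ℝ (Fin n))).comap Subtype.val))
    (νinf : Measure (ℕ → PSpace n a ε)) (hprobν : IsProbabilityMeasure νinf)
    (hνinf : ∀ k : ℕ, νinf.map (fun t (i : Fin k) => t i) = Measure.pi fun _ => ν)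
    (M : Type*) [MetricSpace M] [CompactSpace M] [MeasurableSpace M] [BorelSpace M]
    (m : Measure M) (hmprob : IsProbabilityMeasure m)
    (hmpos : ∀ O : Set M, IsOpen O → O.Nonempty → 0 < m O)
    (f : M → PSpace n a ε → M)
    (hfc : Continuous fun p : M × PSpace n a ε => f p.1 p.2)
    (hfh : ∀ t : PSpace n a ε, IsHomeomorph fun z : M => f z t)
    (hfnull : ∀ (t : PSpace n a ε) (A : Set M), m A = 0 →
      m ((fun z => f z t) '' A) = 0 ∧ m ((fun z => f z t) ⁻¹' A) = 0)
    (l : ℕ) (hl : 0 < l) (A : Fin l → Set M)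
    (hAopen : ∀ i, IsOpen (A i))
    (hAsep : ∀ i j : Fin l, i ≠ j → closure (A i) ∩ closure (A j) = ∅)
    (U : Set M)
    (hUinv : ∀ k : ℕ, 1 ≤ k → ∀ z ∈ U, ∀ t : ℕ → PSpace n a ε,
      pIter f k z t ∈ A ⟨k % l, Nat.mod_lt _ hl⟩) :
    CInvariant f (omegaSetAll f U) ∧
    ∀ i : Fin l, ∀ z ∈ omegaSetAll f U, z ∈ closure (A i) →
      ∀ k : ℕ, 1 ≤ k → ∀ ψ : ℕ → PSpace n a ε,
        pIter f k z ψ ∈ closure (A ⟨((i : ℕ) + k) % l, Nat.mod_lt _ hl⟩) := by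
  constructor
  · intro x hx ψ k hk
    obtain ⟨u, ts, nseq, hu, hmono, htend⟩ := hx
    obtain ⟨ts', -, htend'⟩ := pIter_key hfc htend ψ k
    exact ⟨u, ts', fun j => nseq j + k, hu,
      fun a b hab => Nat.add_lt_add_right (hmono hab) k, htend'⟩
  · intro i z hz hcl k hk ψ
    obtain ⟨u, ts, nseq, hu, hmono, htend⟩ := hz
    -- eventual residue
    have hres : ∀ᶠ j in atTop, nseq j % l = (i : ℕ) := by
      have h1 : ∀ c : Fin l, c ≠ i → ∀ᶠ j in atTop, nseq j % l ≠ (c : ℕ) := by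
        intro c hc
        by_contra hfreq
        rw [Filter.not_eventually] at hfreq
        obtain ⟨φ, hφ, hφP⟩ := Filter.extraction_of_frequently_atTop hfreq
        have hzc : z ∈ closure (A c) := by
          apply mem_closure_of_tendsto (htend.comp hφ.tendsto_atTop)
          filter_upwards [Filter.eventually_ge_atTop 1] with j hj
          have h1k : 1 ≤ nseq (φ j) := le_trans (le_trans hj (hφ.le_apply)) hmono.le_apply
          have hmem := hUinv (nseq (φ j)) h1k (u (φ j)) (hu _) (ts (φ j))
          have hc' : (⟨nseq (φ j) % l, Nat.mod_lt _ hl⟩ : Fin l) = c :=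
            Fin.ext (not_not.mp (hφP j))
          rwa [hc'] at hmem
        exact Set.eq_empty_iff_forall_notMem.mp (hAsep c i hc) z ⟨hzc, hcl⟩
      have h2 : ∀ᶠ j in atTop, ∀ c : Fin l, c ≠ i → nseq j % l ≠ (c : ℕ) := by
        refine Filter.eventually_all.2 fun c => ?_
        by_cases h : c = i
        · exact Filter.Eventually.of_forall fun j hne => absurd h hne
        · exact (h1 c h).mono fun j hj _ => hj
      filter_upwards [h2] with j hj
      by_contra hne
      exact hj ⟨nseq j % l, Nat.mod_lt _ hl⟩
        (fun h => hne (congrArg Fin.val h)) rfl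
    obtain ⟨ts', -, htend'⟩ := pIter_key hfc htend ψ k
    apply mem_closure_of_tendsto htend'
    filter_upwards [hres] with j hj
    have h1k : 1 ≤ nseq j + k := by omega
    have hmem := hUinv (nseq j + k) h1k (u j) (hu j) (ts' j)
    have heq : (⟨(nseq j + k) % l, Nat.mod_lt _ hl⟩ : Fin l)
        = ⟨((i : ℕ) + k) % l, Nat.mod_lt _ hl⟩ := by
      apply Fin.ext
      simp only []
      rw [Nat.add_mod, hj, Nat.add_mod (i : ℕ) k, Nat.mod_eq_of_lt i.isLt]
    rw [heq] at hmem
    exact hmem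

end
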